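/- In the free monoid on the two-letter alphabet {a, b}, let ≈ be the smallest monoid congruence containing the pairs (aaa, aa), (bbb, bb), and (ab, bbaa). Then aab is not congruent to bbaa: ¬(aab ≈ bbaa). -/

import Mathlib

/-!
The defining relations hold for the transformations `a = (0 0 1 3)` and `b = (0 1 1 2)` of
`{0, 1, 2, 3}` (acting on the left, so a word acts letter by letter from the right), hence
congruent words act equally. But `aab` sends `3` to `0`, while `bbaa` sends `3` to `1`.
-/

/-- The smallest monoid congruence on words over `{a, b}` containing the pairs
`(aaa, aa)`, `(bbb, bb)` and `(ab, bbaa)`: the closure of these pairs under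
reflexivity, symmetry, transitivity and concatenation. -/
inductive MonCong : List Bool → List Bool → Prop
  | aaa : MonCong [true, true, true] [true, true]
  | bbb : MonCong [false, false, false] [false, false]
  | ab : MonCong [true, false] [false, false, true, true]
  | refl (u : List Bool) : MonCong u u
  | symm {u v : List Bool} : MonCong u v → MonCong v u
  | trans {u v w : List Bool} : MonCong u v → MonCong v w → MonCong u w
  | mul {u u' v v' : List Bool} :
      MonCong u u' → MonCong v v' → MonCong (u ++ v) (u' ++ v')

section Eval

variable {M : Type*} [Monoid M]

def evalWord (x y : M) (w : List Bool) : M :=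
  (w.map fun c => if c then x else y).prod

theorem evalWord_append (x y : M) (u v : List Bool) :
    evalWord x y (u ++ v) = evalWord x y u * evalWord x y v := by
  simp only [evalWord, List.map_append, List.prod_append]

theorem MonCong.evalWord_eq {x y : M} (hx : x ^ 3 = x ^ 2) (hy : y ^ 3 = y ^ 2)
    (hxy : x * y = y ^ 2 * x ^ 2) {u v : List Bool} (h : MonCong u v) :
    evalWord x y u = evalWord x y v := by
  induction h with
  | aaa => simpa [evalWord, pow_succ, mul_assoc] using hx
  | bbb => simpa [evalWord, pow_succ, mul_assoc] using hy
  | ab => simpa [evalWord, pow_succ, mul_assoc] using hxy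
  | refl => rfl
  | symm _ ih => exact ih.symm
  | trans _ _ ih₁ ih₂ => exact ih₁.trans ih₂
  | mul _ _ ih₁ ih₂ => rw [evalWord_append, evalWord_append, ih₁, ih₂]

end Eval

def transA : Function.End (Fin 4) := ![0, 0, 1, 3]

def transB : Function.End (Fin 4) := ![0, 1, 1, 2]

/-- In the free monoid on `{a, b}`, `aab` is not congruent to `bbaa` modulo
the smallest monoid congruence containing `aaa = aa`, `bbb = bb`, `ab = bbaa`. -/
theorem aab_not_congruent_bbaa :
    ¬ MonCong [true, true, false] [false, false, true, true] := by
  intro h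
  have hA : transA ^ 3 = transA ^ 2 := by
    funext i; revert i; decide
  have hB : transB ^ 3 = transB ^ 2 := by
    funext i; revert i; decide
  have hAB : transA * transB = transB ^ 2 * transA ^ 2 := by
    funext i; revert i; decide
  have h3 := congrFun (h.evalWord_eq hA hB hAB) 3
  revert h3
  decide
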